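/- Let n > 1 and m ≥ 1. Suppose α : 𝔭 → W = S^m(ℂ^{n+1}) is an ℝ-linear map satisfying (i) ρ_m(ξ_u)α(ξ_v) = ρ_m(ξ_v)α(ξ_u) for all u, v ∈ ℂⁿ, and (ii) Σ_{j=1}^n ( ρ_m(ξ_{e_j})α(ξ_{e_j}) + ρ_m(ξ_{i e_j})α(ξ_{i e_j}) ) = 0. Then the W_0-component of α vanishes: P_0(α(ξ_v)) = 0 for all v ∈ ℂⁿ. -/

import Mathlib

/-
Let `F v` be the coefficient of `x_{n+1}^m` in `α(ξ_v)`. In the coefficient of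
`x_k x_{n+1}^{m-1}` in `ρ(ξ_u) α(ξ_w)` the block `ξ_u⁺` contributes `m u_k F(w)`, and the block
`ξ_u⁻` contributes a term conjugate-linear in `u`. Comparing the symmetry (i) at `(u, w)` and at
`(i u, i w)` cancels that term: it gives `u_k G(w) = w_k G(u)` with `G(u) = F(u) - i F(i u)`, so
`F(e_l) = i F(i e_l)`, taking any `k ≠ l` (there is one since `n > 1`). The same computation
turns the trace condition (ii) into `F(e_k) = -i F(i e_k)`. Hence `F` vanishes on the real basis
`e_j, i e_j` of `ℂⁿ`, and `F = 0` by ℝ-linearity.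
-/

open MvPolynomial

noncomputable section

/-- The matrix `ξ_v⁺ = [[0, v],[0, 0]]` in block form. -/
def xiP (n : ℕ) (v : Fin n → ℂ) : Matrix (Fin (n+1)) (Fin (n+1)) ℂ :=
  Matrix.of fun i j => if h : (i : ℕ) < n ∧ j = Fin.last n then v ⟨i, h.1⟩ else 0

/-- The matrix `ξ_v⁻ = [[0, 0],[v*, 0]]` in block form. -/
def xiM (n : ℕ) (v : Fin n → ℂ) : Matrix (Fin (n+1)) (Fin (n+1)) ℂ :=
  Matrix.of fun i j =>
    if h : i = Fin.last n ∧ (j : ℕ) < n then (starRingEnd ℂ) (v ⟨j, h.2⟩) else 0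

/-- The matrix `ξ_v = [[0, v],[v*, 0]]` in block form. -/
def xi (n : ℕ) (v : Fin n → ℂ) : Matrix (Fin (n+1)) (Fin (n+1)) ℂ := xiP n v + xiM n v

/-- The derived representation of `gl(n+1, ℂ)` on `W = S^m(ℂ^{n+1})`, realized on
the polynomial ring `ℂ[x_1, …, x_{n+1}]` (a vector `v` corresponds to the linear
form `Σ v_i x_i` and the symmetric product to the product of polynomials, so that
`(u+w)^j = Σ binom(j,i) u^i w^{j-i}`); it acts by derivations. -/
def rho (n : ℕ) (M : Matrix (Fin (n+1)) (Fin (n+1)) ℂ) :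
    MvPolynomial (Fin (n+1)) ℂ →ₗ[ℂ] MvPolynomial (Fin (n+1)) ℂ :=
  ∑ i, ∑ j, M j i • ((LinearMap.mulLeft ℂ (X j)) ∘ₗ (pderiv i).toLinearMap)

/-- The component `W_k = S^k(V_1)·e_{n+1}^{m-k}` of `W = S^m(ℂ^{n+1})`: the span of
monomials of total degree `m` with degree `m - k` in the last variable. -/
def Wcomp (n m k : ℕ) : Submodule ℂ (MvPolynomial (Fin (n+1)) ℂ) :=
  Submodule.span ℂ {p | ∃ d : Fin (n+1) →₀ ℕ,
    (∑ i, d i) = m ∧ d (Fin.last n) = m - k ∧ p = monomial d 1}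

section

open Complex

/- `B u w` models the coefficient of `x_k x_{n+1}^{m-1}` in `ρ(ξ_u) α(ξ_w)` and `F w` that of
`x_{n+1}^m` in `α(ξ_w)`: the block `ξ_u⁺` contributes `ℓ u * F w` and the block `ξ_u⁻` contributes
`ψ u w`, which is conjugate-linear in `u`. -/
variable {V : Type*} [AddCommGroup V] [Module ℂ V] {ℓ : V →ₗ[ℂ] ℂ} {F : V → ℂ}
  {B ψ : V → V → ℂ}

theorem apply_add_apply_I_smul_I_smul (hB : ∀ u w, B u w = ℓ u * F w + ψ u w)
    (hBsymm : ∀ u w, B u w = B w u) (hψ : ∀ u w, ψ (I • u) w = -I * ψ u w) (u w : V) :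
    B u w + B (I • u) (I • w) = 2 * (ℓ w * F u + I * ℓ u * F (I • w)) := by
  have h₁ := hBsymm u (I • w)
  have h₂ := hBsymm u w
  simp only [hB, hψ, map_smul, smul_eq_mul] at h₁ h₂ ⊢
  linear_combination h₂ - I * h₁ - (ℓ w * F u - ψ w u) * I_mul_I

theorem mul_sub_I_mul_apply_I_smul_comm (hB : ∀ u w, B u w = ℓ u * F w + ψ u w)
    (hBsymm : ∀ u w, B u w = B w u) (hψ : ∀ u w, ψ (I • u) w = -I * ψ u w) (u w : V) :
    ℓ u * (F w - I * F (I • w)) = ℓ w * (F u - I * F (I • u)) := by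
  have h := apply_add_apply_I_smul_I_smul hB hBsymm hψ u w
  rw [hBsymm u w, hBsymm (I • u), apply_add_apply_I_smul_I_smul hB hBsymm hψ w u] at h
  linear_combination h / 2

theorem apply_self_add_apply_I_smul_self (hB : ∀ u w, B u w = ℓ u * F w + ψ u w)
    (hBsymm : ∀ u w, B u w = B w u) (hψ : ∀ u w, ψ (I • u) w = -I * ψ u w) (u : V) :
    B u u + B (I • u) (I • u) = 2 * ℓ u * (F u + I * F (I • u)) := by
  rw [apply_add_apply_I_smul_I_smul hB hBsymm hψ]
  ring

theorem LinearMap.pi_ext_one_I {ι M : Type*} [Finite ι] [DecidableEq ι] [AddCommGroup M]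
    [Module ℝ M] {f g : (ι → ℂ) →ₗ[ℝ] M} (h₁ : ∀ j, f (Pi.single j 1) = g (Pi.single j 1))
    (hI : ∀ j, f (I • Pi.single j 1) = g (I • Pi.single j 1)) : f = g := by
  have := Fintype.ofFinite ι
  refine (Pi.basis fun _ : ι => basisOneI).ext fun ⟨j, i⟩ => ?_
  fin_cases i
  · simpa using h₁ j
  · simpa [← Pi.single_smul'] using hI j

theorem realLinearMap_eq_zero_of_symmetric_of_trace_eq_zero {n : ℕ} (hn : 1 < n) {c : ℂ}
    (hc : c ≠ 0) (F : (Fin n → ℂ) →ₗ[ℝ] ℂ) {B ψ : Fin n → (Fin n → ℂ) → (Fin n → ℂ) → ℂ}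
    (hB : ∀ k u w, B k u w = c * u k * F w + ψ k u w) (hBsymm : ∀ k u w, B k u w = B k w u)
    (hψ : ∀ k u w, ψ k (I • u) w = -I * ψ k u w)
    (htr : ∀ k, ∑ j, (B k (Pi.single j 1) (Pi.single j 1)
      + B k (I • Pi.single j 1) (I • Pi.single j 1)) = 0) :
    F = 0 := by
  have hB' : ∀ k u w,
      B k u w = (c • LinearMap.proj k : (Fin n → ℂ) →ₗ[ℂ] ℂ) u * F w + ψ k u w := by
    simpa using hB
  have hantilinear : ∀ l, F (Pi.single l 1) = I * F (I • Pi.single l 1) := by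
    intro l
    have : Nontrivial (Fin n) := Fin.nontrivial_iff_two_le.mpr hn
    obtain ⟨k, hkl⟩ := exists_ne l
    have h := mul_sub_I_mul_apply_I_smul_comm (hB' k) (hBsymm k) (hψ k)
      (Pi.single l 1) (Pi.single k 1)
    simpa [hkl, hc, sub_eq_zero] using h
  have hlinear : ∀ k, F (Pi.single k 1) = -I * F (I • Pi.single k 1) := by
    intro k
    have h := htr k
    simp only [apply_self_add_apply_I_smul_self (hB' k) (hBsymm k) (hψ k)] at h
    simp [Pi.single_apply, hc] at h
    linear_combination h
  have hI : ∀ j, F (I • Pi.single j 1) = 0 := fun j => by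
    have h : 2 * I * F (I • Pi.single j 1) = 0 := by
      linear_combination (hantilinear j).symm.trans (hlinear j)
    simpa [I_ne_zero] using h
  refine LinearMap.pi_ext_one_I (fun j => ?_) (fun j => ?_)
  · rw [hantilinear, hI, mul_zero, LinearMap.zero_apply]
  · rw [hI, LinearMap.zero_apply]

end

section

variable {n : ℕ}

theorem rho_apply (M : Matrix (Fin (n+1)) (Fin (n+1)) ℂ) (p : MvPolynomial (Fin (n+1)) ℂ) :
    rho n M p = ∑ i, ∑ j, M j i • (X j * pderiv i p) := by
  simp [rho, LinearMap.sum_apply]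

theorem rho_add (M N : Matrix (Fin (n+1)) (Fin (n+1)) ℂ) : rho n (M + N) = rho n M + rho n N := by
  simp [rho, add_smul, Finset.sum_add_distrib]

theorem rho_smul (c : ℂ) (M : Matrix (Fin (n+1)) (Fin (n+1)) ℂ) : rho n (c • M) = c • rho n M := by
  simp [rho, smul_smul, Finset.smul_sum]

theorem xiM_smul (c : ℂ) (v : Fin n → ℂ) : xiM n (c • v) = starRingEnd ℂ c • xiM n v := by
  ext i j
  simp only [xiM, Matrix.of_apply, Matrix.smul_apply, Pi.smul_apply, smul_eq_mul, map_mul]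
  split_ifs <;> simp

theorem rho_xiP_apply (u : Fin n → ℂ) (p : MvPolynomial (Fin (n+1)) ℂ) :
    rho n (xiP n u) p = ∑ k, u k • (X k.castSucc * pderiv (Fin.last n) p) := by
  simp [rho_apply, Fin.sum_univ_castSucc, xiP]

theorem coeff_rho_xiP (m : ℕ) (k : Fin n) (u : Fin n → ℂ) (p : MvPolynomial (Fin (n+1)) ℂ) :
    coeff (Finsupp.single k.castSucc 1 + Finsupp.single (Fin.last n) m) (rho n (xiP n u) p)
      = (m + 1) * u k * coeff (Finsupp.single (Fin.last n) (m + 1)) p := by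
  classical
  rw [rho_xiP_apply, coeff_sum, Finset.sum_eq_single k]
  · rw [coeff_smul, coeff_X_mul, coeff_pderiv, ← Finsupp.single_add]
    simp only [Finsupp.single_eq_same, smul_eq_mul]
    ring
  · intro k' _ hk'
    rw [coeff_smul, coeff_X_mul', if_neg, smul_zero]
    simp [Fin.castSucc_ne_last, hk']
  · simp

theorem coeff_rho_xi (m : ℕ) (k : Fin n) (u : Fin n → ℂ) (p : MvPolynomial (Fin (n+1)) ℂ) :
    coeff (Finsupp.single k.castSucc 1 + Finsupp.single (Fin.last n) m) (rho n (xi n u) p)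
      = (m + 1) * u k * coeff (Finsupp.single (Fin.last n) (m + 1)) p
        + coeff (Finsupp.single k.castSucc 1 + Finsupp.single (Fin.last n) m)
            (rho n (xiM n u) p) := by
  rw [xi, rho_add, LinearMap.add_apply, coeff_add, coeff_rho_xiP]

end

theorem bottom_component_vanishes_general (n m : ℕ) (hn : 1 < n) (hm : 1 ≤ m)
    (α : (Fin n → ℂ) → MvPolynomial (Fin (n+1)) ℂ)
    (hadd : ∀ u v, α (u + v) = α u + α v)
    (hsmul : ∀ (r : ℝ) (v : Fin n → ℂ), α ((r : ℂ) • v) = (r : ℂ) • α v)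
    (hsym : ∀ u v, rho n (xi n u) (α v) = rho n (xi n v) (α u))
    (htr : ∑ j : Fin n,
        (rho n (xi n (Pi.single j 1)) (α (Pi.single j 1))
          + rho n (xi n (Pi.single j Complex.I)) (α (Pi.single j Complex.I))) = 0) :
    ∀ v, coeff (Finsupp.single (Fin.last n) m) (α v) = 0 := by
  obtain ⟨m, rfl⟩ : ∃ m', m = m' + 1 := ⟨m - 1, by omega⟩
  let A : (Fin n → ℂ) →ₗ[ℝ] MvPolynomial (Fin (n+1)) ℂ :=
    { toFun := α
      map_add' := hadd
      map_smul' := fun r v => by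
        rw [RingHom.id_apply, ← algebraMap_smul ℂ r v, ← algebraMap_smul ℂ r (α v)]
        exact hsmul r v }
  let D (k : Fin n) := Finsupp.single k.castSucc 1 + Finsupp.single (Fin.last n) m
  have hF := realLinearMap_eq_zero_of_symmetric_of_trace_eq_zero hn (c := (m + 1 : ℂ))
    (by norm_cast) (((lcoeff ℂ (Finsupp.single (Fin.last n) (m + 1))).restrictScalars ℝ).comp A)
    (B := fun k u w => coeff (D k) (rho n (xi n u) (α w)))
    (ψ := fun k u w => coeff (D k) (rho n (xiM n u) (α w)))
    (fun k u w => coeff_rho_xi m k u (α w)) (fun k u w => by rw [hsym])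
    (fun k u w => by
      rw [xiM_smul, Complex.conj_I, rho_smul, LinearMap.smul_apply, coeff_smul, smul_eq_mul])
    (fun k => by simpa [← Pi.single_smul', coeff_sum] using congrArg (coeff (D k)) htr)
  exact fun v => LinearMap.congr_fun hF v

/-- If `α : 𝔭 → W = S^m(ℂ^{n+1})` is ℝ-linear, symmetric and trace free, then its
`W_0`-component vanishes: the coefficient of the monomial `e_{n+1}^m` in `α(ξ_v)`
is zero for every `v`. -/
theorem bottom_component_vanishes (n m : ℕ) (hn : 1 < n) (hm : 1 ≤ m)
    (α : (Fin n → ℂ) → MvPolynomial (Fin (n+1)) ℂ)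
    (hW : ∀ v, α v ∈ homogeneousSubmodule (Fin (n+1)) ℂ m)
    (hadd : ∀ u v, α (u + v) = α u + α v)
    (hsmul : ∀ (r : ℝ) (v : Fin n → ℂ), α ((r : ℂ) • v) = (r : ℂ) • α v)
    (hsym : ∀ u v, rho n (xi n u) (α v) = rho n (xi n v) (α u))
    (htr : ∑ j : Fin n,
        (rho n (xi n (Pi.single j 1)) (α (Pi.single j 1))
          + rho n (xi n (Pi.single j Complex.I)) (α (Pi.single j Complex.I))) = 0) :
    ∀ v, coeff (Finsupp.single (Fin.last n) m) (α v) = 0 :=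
  bottom_component_vanishes_general n m hn hm α hadd hsmul hsym htr

end
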